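/- The topological entropy of any self-induced minimal Cantor system is either 0 or +∞. -/

import Mathlib

/-
Let `S` be the first return map of `T` to the clopen set `U`. By compactness and minimality,
every orbit enters `U` within `N` steps, leaves it within `K` steps, and every point is the image
under some `T^j`, `j < K₂`, of a point of `U`. Since orbits leave `U` within `K` steps, `K * m`
returns take at least `(K + 1) * m` steps of `T`; and points whose `S`-orbits stay close see `U`
at the same times, so their `T`-orbits stay close over all these steps. Counting covers gives
`(K + 1) * h(T) ≤ K * h(S)`, while `h(S) = h(T)` because `(U, S)` is conjugate to `(X, T)`.
Hence `h(T)` is `0` or `∞`.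
-/

open Set

/-- Return time function `r_A(x) = inf {n > 0 : Tⁿ x ∈ A}`. -/
noncomputable def retTime {α : Type*} (T : α → α) (A : Set α) (x : α) : ℕ :=
  sInf {n : ℕ | 0 < n ∧ T^[n] x ∈ A}

/-- Minimality: every (two-sided) orbit is dense. -/
def IsMinimalHomeo {X : Type*} [TopologicalSpace X] (T : X ≃ₜ X) : Prop :=
  ∀ x : X, Dense {y : X | ∃ n : ℤ, (T.toEquiv ^ n) x = y}

/-- A system is self-induced if it is conjugate to its first-return system on
some nonempty proper clopen subset. -/
def SelfInduced {X : Type*} [TopologicalSpace X] (T : X ≃ₜ X) : Prop :=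
  ∃ U : Set X, IsClopen U ∧ U.Nonempty ∧ U ≠ Set.univ ∧
    ∃ φ : X → X, Continuous φ ∧ Function.Injective φ ∧ Set.range φ = U ∧
      ∀ x : X, φ (T x) = (⇑T)^[retTime (⇑T) U (φ x)] (φ x)

open Function Filter Topology Dynamics Uniformity UniformSpace

theorem Homeomorph.continuous_toEquiv_zpow {X : Type*} [TopologicalSpace X] (T : X ≃ₜ X)
    (n : ℤ) : Continuous ⇑(T.toEquiv ^ n) := by
  induction n using Int.induction_on with
  | zero => exact continuous_id
  | succ k ih =>
    rw [zpow_add_one, Equiv.Perm.coe_mul]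
    exact ih.comp T.continuous
  | pred k ih =>
    rw [zpow_sub_one, Equiv.Perm.coe_mul]
    exact ih.comp T.symm.continuous

section Minimal

variable {X : Type*} [TopologicalSpace X] {T : X ≃ₜ X}

theorem IsMinimalHomeo.symm (h : IsMinimalHomeo T) : IsMinimalHomeo T.symm := by
  refine fun x => (h x).mono ?_
  rintro _ ⟨n, rfl⟩
  refine ⟨-n, ?_⟩
  show (T.toEquiv⁻¹ ^ (-n)) x = _
  rw [inv_zpow', neg_neg]

theorem IsMinimalHomeo.exists_forall_exists_lt_iterate_mem [CompactSpace X]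
    (h : IsMinimalHomeo T) {O : Set X} (hO : IsOpen O) (hne : O.Nonempty) :
    ∃ K, ∀ x, ∃ j < K, T^[j] x ∈ O := by
  have hcov : univ ⊆ ⋃ n : ℤ, ⇑(T.toEquiv ^ n) ⁻¹' O := fun x _ => by
    obtain ⟨_, ⟨n, rfl⟩, hn⟩ := (h x).exists_mem_open hO hne
    exact mem_iUnion.2 ⟨n, hn⟩
  obtain ⟨t, ht⟩ := isCompact_univ.elim_finite_subcover _
    (fun n => hO.preimage (T.continuous_toEquiv_zpow n)) hcov
  -- shifting by `M` turns the finitely many times `n ∈ t` into times in `[0, 2M]`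
  set M := t.sup Int.natAbs
  refine ⟨2 * M + 1, fun x => ?_⟩
  obtain ⟨n, hnt, hn⟩ := mem_iUnion₂.1 (ht (mem_univ ((T.toEquiv ^ (M : ℤ)) x)))
  have hnM : n.natAbs ≤ M := Finset.le_sup (f := Int.natAbs) hnt
  refine ⟨(n + M).toNat, by omega, ?_⟩
  show (⇑T.toEquiv)^[_] x ∈ O
  rwa [Equiv.Perm.iterate_eq_pow, ← zpow_natCast, Int.toNat_of_nonneg (by omega), zpow_add,
    Equiv.Perm.mul_apply]

end Minimal

noncomputable def firstReturnMap {α : Type*} (T : α → α) (A : Set α) (x : α) : α :=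
  T^[retTime T A x] x

noncomputable def nthReturnTime {α : Type*} (T : α → α) (A : Set α) (x : α) (n : ℕ) :
    ℕ :=
  ∑ i ∈ Finset.range n, retTime T A ((firstReturnMap T A)^[i] x)

section ReturnTimes

variable {α : Type*} {T : α → α} {A : Set α} {N : ℕ}

theorem exists_pos_le_iterate_mem (hA : ∀ x, ∃ j < N, T^[j] x ∈ A) (x : α) :
    ∃ n, 0 < n ∧ n ≤ N ∧ T^[n] x ∈ A := by
  obtain ⟨j, hj, hjA⟩ := hA (T x)
  exact ⟨j + 1, j.succ_pos, hj, by rwa [iterate_succ_apply]⟩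

theorem retTime_pos (hA : ∀ x, ∃ j < N, T^[j] x ∈ A) (x : α) : 0 < retTime T A x :=
  have ⟨n, hn, _, hnA⟩ := exists_pos_le_iterate_mem hA x
  (Nat.sInf_mem (s := {n | 0 < n ∧ T^[n] x ∈ A}) ⟨n, hn, hnA⟩).1

theorem firstReturnMap_mem (hA : ∀ x, ∃ j < N, T^[j] x ∈ A) (x : α) :
    firstReturnMap T A x ∈ A :=
  have ⟨n, hn, _, hnA⟩ := exists_pos_le_iterate_mem hA x
  (Nat.sInf_mem (s := {n | 0 < n ∧ T^[n] x ∈ A}) ⟨n, hn, hnA⟩).2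

theorem retTime_le (hA : ∀ x, ∃ j < N, T^[j] x ∈ A) (x : α) : retTime T A x ≤ N :=
  have ⟨_, hn, hnN, hnA⟩ := exists_pos_le_iterate_mem hA x
  (Nat.sInf_le (s := {n | 0 < n ∧ T^[n] x ∈ A}) ⟨hn, hnA⟩).trans hnN

theorem iterate_firstReturnMap_mem (hA : ∀ x, ∃ j < N, T^[j] x ∈ A) {x : α} (hx : x ∈ A) :
    ∀ n, (firstReturnMap T A)^[n] x ∈ A
  | 0 => hx
  | n + 1 => by rw [iterate_succ_apply']; exact firstReturnMap_mem hA _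

theorem retTime_eq_of_forall_le_iff (hA : ∀ x, ∃ j < N, T^[j] x ∈ A) {x y : α}
    (h : ∀ j ≤ N, T^[j] x ∈ A ↔ T^[j] y ∈ A) : retTime T A x = retTime T A y :=
  le_antisymm
    (Nat.sInf_le ⟨retTime_pos hA y, (h _ (retTime_le hA y)).2 (firstReturnMap_mem hA y)⟩)
    (Nat.sInf_le ⟨retTime_pos hA x, (h _ (retTime_le hA x)).1 (firstReturnMap_mem hA x)⟩)

theorem nthReturnTime_succ (T : α → α) (A : Set α) (x : α) (n : ℕ) :
    nthReturnTime T A x (n + 1) =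
      nthReturnTime T A x n + retTime T A ((firstReturnMap T A)^[n] x) :=
  Finset.sum_range_succ _ _

theorem iterate_nthReturnTime (T : α → α) (A : Set α) (x : α) (n : ℕ) :
    T^[nthReturnTime T A x n] x = (firstReturnMap T A)^[n] x := by
  induction n with
  | zero => rfl
  | succ n ih =>
    rw [nthReturnTime_succ, add_comm, iterate_add_apply, ih, iterate_succ_apply']
    rfl

theorem strictMono_nthReturnTime (hA : ∀ x, ∃ j < N, T^[j] x ∈ A) (x : α) :
    StrictMono (nthReturnTime T A x) :=
  strictMono_nat_of_lt_succ fun n => by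
    rw [nthReturnTime_succ]
    exact Nat.lt_add_of_pos_right (retTime_pos hA _)

theorem exists_nthReturnTime_le_lt {x : α} {t n : ℕ}
    (ht : t < nthReturnTime T A x n) :
    ∃ i < n, nthReturnTime T A x i ≤ t ∧ t < nthReturnTime T A x (i + 1) := by
  induction n with
  | zero => simp [nthReturnTime] at ht
  | succ n ih =>
    by_cases h : t < nthReturnTime T A x n
    · obtain ⟨i, hi, h⟩ := ih h
      exact ⟨i, by omega, h⟩
    · exact ⟨n, by omega, by omega, ht⟩

theorem nthReturnTime_add_succ_le (hA : ∀ x, ∃ j < N, T^[j] x ∈ A) {K : ℕ}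
    (hK : ∀ x, ∃ j < K, T^[j] x ∉ A) {x : α} (hx : x ∈ A) (n : ℕ) :
    nthReturnTime T A x n + K + 1 ≤ nthReturnTime T A x (n + K) := by
  have hτ := strictMono_nthReturnTime hA x
  by_contra! hlt
  have hstep : ∀ j ≤ K, nthReturnTime T A x (n + j) = nthReturnTime T A x n + j :=
      fun j hj => by
    have h₁ := hτ.add_le_nat j n
    have h₂ := hτ.add_le_nat (K - j) (n + j)
    rw [add_comm j n] at h₁
    rw [show K - j + (n + j) = n + K by omega] at h₂
    omega
  obtain ⟨j, hj, hjA⟩ := hK (T^[nthReturnTime T A x n] x)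
  apply hjA
  rw [← iterate_add_apply, add_comm, ← hstep j hj.le, iterate_nthReturnTime]
  exact iterate_firstReturnMap_mem hA hx _

theorem succ_mul_le_nthReturnTime_mul (hA : ∀ x, ∃ j < N, T^[j] x ∈ A) {K : ℕ}
    (hK : ∀ x, ∃ j < K, T^[j] x ∉ A) {x : α} (hx : x ∈ A) (m : ℕ) :
    (K + 1) * m ≤ nthReturnTime T A x (K * m) := by
  induction m with
  | zero => simp
  | succ m ih =>
    have := nthReturnTime_add_succ_le hA hK hx (K * m)
    rw [mul_add_one, mul_add_one]
    omega

/-- The second component of the entourage makes close points visit `A` at the same times, so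
their return times agree and their `T`-orbits stay `W`-close between consecutive returns. -/
theorem mem_dynEntourage_of_mem_dynEntourage_firstReturnMap
    (hA : ∀ x, ∃ j < N, T^[j] x ∈ A) {W : SetRel α α} {x y : α} {n : ℕ}
    (h : (x, y) ∈ dynEntourage (firstReturnMap T A)
      (dynEntourage T (W ∩ {p | p.1 ∈ A ↔ p.2 ∈ A}) (N + 1)) n) :
    (x, y) ∈ dynEntourage T W (nthReturnTime T A x n) := by
  have hclose : ∀ i < n, ∀ j ≤ N,
      (T^[j] ((firstReturnMap T A)^[i] x), T^[j] ((firstReturnMap T A)^[i] y)) ∈ W ∧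
      (T^[j] ((firstReturnMap T A)^[i] x) ∈ A ↔ T^[j] ((firstReturnMap T A)^[i] y) ∈ A) :=
    fun i hi j hj =>
    mem_dynEntourage.1 (mem_dynEntourage.1 h i hi) j (Nat.lt_succ_of_le hj)
  have hτ : ∀ i ≤ n, nthReturnTime T A x i = nthReturnTime T A y i := fun i hi =>
    Finset.sum_congr rfl fun k hk => retTime_eq_of_forall_le_iff hA fun j hj =>
      (hclose k (by rw [Finset.mem_range] at hk; omega) j hj).2
  refine mem_dynEntourage.2 fun t ht => ?_
  obtain ⟨i, hi, hit, hti⟩ := exists_nthReturnTime_le_lt ht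
  obtain ⟨j, rfl⟩ : ∃ j, t = j + nthReturnTime T A x i :=
    ⟨t - nthReturnTime T A x i, by omega⟩
  have hj : j ≤ N := by
    have := retTime_le hA ((firstReturnMap T A)^[i] x)
    rw [nthReturnTime_succ] at hti
    omega
  rw [iterate_add_apply, iterate_add_apply, iterate_nthReturnTime, hτ i hi.le,
    iterate_nthReturnTime]
  exact (hclose i hi j hj).1

end ReturnTimes

theorem IsClopen.setOf_iff_mem_uniformity {X : Type*} [UniformSpace X] [CompactSpace X]
    {A : Set X} (hA : IsClopen A) : {p : X × X | p.1 ∈ A ↔ p.2 ∈ A} ∈ 𝓤 X := by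
  rw [← nhdsSet_diagonal_eq_uniformity]
  have heq : {p : X × X | p.1 ∈ A ↔ p.2 ∈ A} = A ×ˢ A ∪ Aᶜ ×ˢ Aᶜ := by
    ext ⟨a, b⟩
    by_cases ha : a ∈ A <;> by_cases hb : b ∈ A <;> simp [ha, hb]
  refine IsOpen.mem_nhdsSet ?_ |>.2 fun p (hp : p.1 = p.2) => by simp [hp]
  rw [heq]
  exact (hA.isOpen.prod hA.isOpen).union (hA.compl.isOpen.prod hA.compl.isOpen)

section Covers

variable {X : Type*}

theorem coverMincard_le_of_dynEntourage_imp {S T : X → X} {F : Set X} {V W : SetRel X X}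
    {m n : ℕ}
    (h : ∀ x ∈ F, ∀ y, (x, y) ∈ dynEntourage S V m → (x, y) ∈ dynEntourage T W n) :
    coverMincard T F W n ≤ coverMincard S F V m :=
  biInf_mono fun _ hs x hx =>
    have ⟨y, hy, hxy⟩ := hs hx
    ⟨y, hy, h x hx y hxy⟩

theorem coverMincard_univ_le_mul [Nonempty X] {f g : X → X} (hfg : RightInverse g f)
    {F : Set X} {k : ℕ} (hk : ∀ x, ∃ j < k, g^[j] x ∈ F) (W : SetRel X X) (n : ℕ) :
    coverMincard f univ W n ≤ k * coverMincard f F W (n + k) := by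
  classical
  have hk0 : (k : ℕ∞) ≠ 0 := by
    obtain ⟨j, hj, -⟩ := hk (Classical.arbitrary X)
    exact_mod_cast (by omega : k ≠ 0)
  simp only [coverMincard, ENat.mul_iInf_of_ne hk0]
  refine le_iInf₂ fun s hs => ?_
  set t := (Finset.range k).biUnion fun j => s.image f^[j]
  have ht : IsDynCoverOf f univ W n t := fun x _ => by
    obtain ⟨j, hj, hjF⟩ := hk x
    obtain ⟨y, hy, hxy⟩ := hs hjF
    refine ⟨f^[j] y, by simpa [t] using ⟨j, hj, y, hy, rfl⟩,
      mem_dynEntourage.2 fun i hi => ?_⟩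
    have := mem_dynEntourage.1 hxy (i + j) (by omega)
    rwa [iterate_add_apply, iterate_add_apply, (hfg.iterate j) x] at this
  calc coverMincard f univ W n ≤ t.card := ht.coverMincard_le_card
    _ ≤ (k * s.card : ℕ) := by
      gcongr
      simpa using Finset.card_biUnion_le_card_mul (Finset.range k) _ s.card
        fun j _ => Finset.card_image_le
    _ = k * s.card := by push_cast; rfl

end Covers

theorem tendsto_natCast_mul_add_div_atTop (a b : ℕ) :
    Tendsto (fun n : ℕ => ((a * n + b : ℕ) : EReal) / n) atTop (𝓝 (a : EReal)) := by
  have : Tendsto (fun n : ℕ => (a : ℝ) + b / n) atTop (𝓝 a) := by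
    simpa using tendsto_const_nhds.add (tendsto_const_div_atTop_nhds_zero_nat (b : ℝ))
  refine (EReal.tendsto_coe.2 this).congr' ?_
  filter_upwards [eventually_ne_atTop 0] with n hn
  have hreal : (a : ℝ) + b / n = ((a * n + b : ℕ) : ℝ) / n := by field_simp; push_cast; ring
  rw [hreal, EReal.coe_div]
  rfl

theorem coverEntropy_range_of_semiconj {X Y : Type*} [UniformSpace X] [CompactSpace X]
    [UniformSpace Y] {φ : X → Y} (hφ : IsEmbedding φ) {S : X → X} {T : Y → Y}
    (h : Semiconj φ S T) : coverEntropy T (range φ) = coverEntropy S univ := by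
  have hcomap : UniformSpace.comap φ ‹_› = ‹UniformSpace X› :=
    unique_uniformity_of_compact
      (by rw [UniformSpace.toTopologicalSpace_comap]; exact hφ.eq_induced.symm) rfl
  rw [← image_univ, coverEntropy_image_of_comap _ h, hcomap]

theorem EReal.eq_zero_or_eq_top_of_succ_mul_le {h : EReal} {K : ℕ} (h0 : 0 ≤ h)
    (hle : ((K + 1 : ℕ) : EReal) * h ≤ K * h) : h = 0 ∨ h = ⊤ := by
  induction h using EReal.rec with
  | bot => exact absurd h0 (by simp)
  | coe r =>
    have hr : ((K + 1 : ℕ) : ℝ) * r ≤ K * r := by exact_mod_cast hle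
    have h0' : 0 ≤ r := by exact_mod_cast h0
    push_cast at hr
    left
    exact_mod_cast (by linarith : r = 0)
  | top => exact Or.inr rfl

section Entropy

open scoped ENNReal
open ExpGrowth

variable {X : Type*} [UniformSpace X] [CompactSpace X] [Nonempty X]

theorem natCast_succ_mul_coverEntropyEntourage_le {T g : X → X} (hT : Continuous T)
    (hg : RightInverse g T) {A : Set X} (hA : IsClopen A) {N K K₂ : ℕ}
    (hN : ∀ x, ∃ j < N, T^[j] x ∈ A) (hK : ∀ x, ∃ j < K, T^[j] x ∉ A)
    (hK₂ : ∀ x, ∃ j < K₂, g^[j] x ∈ A) {W : SetRel X X} (hW : W ∈ 𝓤 X) :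
    ((K + 1 : ℕ) : EReal) * coverEntropyEntourage T univ W ≤
      K * coverEntropy (firstReturnMap T A) A := by
  set V := dynEntourage T (W ∩ {p | p.1 ∈ A ↔ p.2 ∈ A}) (N + 1)
  have hV : V ∈ 𝓤 X := dynEntourage_mem_uniformity
    (CompactSpace.uniformContinuous_of_continuous hT) (inter_mem hW hA.setOf_iff_mem_uniformity) _
  have hK0 : K ≠ 0 := by
    obtain ⟨j, hj, -⟩ := hK (Classical.arbitrary X)
    omega
  have hmono (S : X → X) (F : Set X) (U : SetRel X X) :
      Monotone fun n => (coverMincard S F U n : ℝ≥0∞) :=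
    fun _ _ h => ENat.toENNReal_mono (coverMincard_monotone_time _ _ _ h)
  have hcover (m : ℕ) : coverMincard T A W ((K + 1) * m + K₂) ≤
      coverMincard (firstReturnMap T A) A V (K * m + K₂) :=
    coverMincard_le_of_dynEntourage_imp fun x hx y hxy => by
      refine dynEntourage_antitone T W ?_
        (mem_dynEntourage_of_mem_dynEntourage_firstReturnMap hN hxy)
      have h₁ := succ_mul_le_nthReturnTime_mul hN hK hx m
      have h₂ := (strictMono_nthReturnTime hN x).add_le_nat K₂ (K * m)
      rw [add_comm K₂ (K * m)] at h₂
      omega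
  calc ((K + 1 : ℕ) : EReal) * coverEntropyEntourage T univ W
      = expGrowthSup fun m => (coverMincard T univ W ((K + 1) * m) : ℝ≥0∞) :=
        ((hmono T univ W).expGrowthSup_comp_mul (Nat.succ_ne_zero K)).symm
    _ ≤ expGrowthSup fun m => (coverMincard T A W ((K + 1) * m + K₂) : ℝ≥0∞) :=
        expGrowthSup_le_of_eventually_le (b := K₂) (ENNReal.natCast_ne_top K₂)
          (Eventually.of_forall fun m => by exact_mod_cast coverMincard_univ_le_mul hg hK₂ W _)
    _ ≤ expGrowthSup fun m =>
          (coverMincard (firstReturnMap T A) A V (K * m + K₂) : ℝ≥0∞) :=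
        expGrowthSup_monotone fun m => ENat.toENNReal_mono (hcover m)
    _ = K * coverEntropyEntourage (firstReturnMap T A) A V :=
        (hmono _ A V).expGrowthSup_comp (v := fun m => K * m + K₂)
          (tendsto_natCast_mul_add_div_atTop K K₂) (by exact_mod_cast hK0)
          (EReal.natCast_ne_top K)
    _ ≤ K * coverEntropy (firstReturnMap T A) A :=
        mul_le_mul_of_nonneg_left (coverEntropyEntourage_le_coverEntropy _ _ hV) (by positivity)

theorem natCast_succ_mul_coverEntropy_le {T g : X → X} (hT : Continuous T)
    (hg : RightInverse g T) {A : Set X} (hA : IsClopen A) {N K K₂ : ℕ}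
    (hN : ∀ x, ∃ j < N, T^[j] x ∈ A) (hK : ∀ x, ∃ j < K, T^[j] x ∉ A)
    (hK₂ : ∀ x, ∃ j < K₂, g^[j] x ∈ A) :
    ((K + 1 : ℕ) : EReal) * coverEntropy T univ ≤ K * coverEntropy (firstReturnMap T A) A := by
  have hA₀ : A.Nonempty :=
    have ⟨_, _, hj⟩ := hN (Classical.arbitrary X)
    ⟨_, hj⟩
  refine EReal.mul_le_of_forall_lt_of_nonneg (by positivity)
    (EReal.mul_nonneg (by positivity) (coverEntropy_nonneg _ hA₀)) fun a ha b hb => ?_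
  obtain ⟨W, hW, hbW⟩ : ∃ W ∈ 𝓤 X, b < coverEntropyEntourage T univ W := by
    simpa only [coverEntropy, lt_iSup_iff, exists_prop] using hb.2
  calc a * b ≤ (K + 1 : ℕ) * coverEntropyEntourage T univ W :=
        mul_le_mul ha.2.le hbW.le hb.1.le (by positivity)
    _ ≤ K * coverEntropy (firstReturnMap T A) A :=
        natCast_succ_mul_coverEntropyEntourage_le hT hg hA hN hK hK₂ hW

end Entropy

theorem stmt6_general {X : Type*} [MetricSpace X] [CompactSpace X]
    (T : X ≃ₜ X) (hmin : IsMinimalHomeo T) (hsi : SelfInduced T) :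
    Dynamics.coverEntropy (⇑T) Set.univ = 0 ∨ Dynamics.coverEntropy (⇑T) Set.univ = ⊤ := by
  obtain ⟨U, hU, hUne, hU_ne_univ, φ, hφc, hφinj, rfl, hφ⟩ := hsi
  have : Nonempty X := ⟨hUne.some⟩
  obtain ⟨N, hN⟩ := hmin.exists_forall_exists_lt_iterate_mem hU.isOpen hUne
  obtain ⟨K, hK⟩ := hmin.exists_forall_exists_lt_iterate_mem hU.isClosed.isOpen_compl
    (nonempty_compl.2 hU_ne_univ)
  obtain ⟨K₂, hK₂⟩ := hmin.symm.exists_forall_exists_lt_iterate_mem hU.isOpen hUne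
  have hconj : coverEntropy (firstReturnMap T (range φ)) (range φ) = coverEntropy T univ :=
    coverEntropy_range_of_semiconj (hφc.isClosedEmbedding hφinj).isEmbedding hφ
  refine EReal.eq_zero_or_eq_top_of_succ_mul_le (K := K) (coverEntropy_nonneg _ univ_nonempty) ?_
  calc _ ≤ K * coverEntropy (firstReturnMap T (range φ)) (range φ) :=
        natCast_succ_mul_coverEntropy_le T.continuous T.apply_symm_apply hU hN hK hK₂
    _ = K * coverEntropy T univ := by rw [hconj]

theorem stmt6 {X : Type*} [MetricSpace X] [CompactSpace X]
    [TotallyDisconnectedSpace X] [PerfectSpace X]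
    (T : X ≃ₜ X) (hmin : IsMinimalHomeo T) (hsi : SelfInduced T) :
    Dynamics.coverEntropy (⇑T) Set.univ = 0 ∨ Dynamics.coverEntropy (⇑T) Set.univ = ⊤ :=
  stmt6_general T hmin hsi
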